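/- Let A_k with a_1 = 1 be a symmetric basis (a_i + a_{k-i} = a_k for 1 ≤ i ≤ k-1) that is h_0-admissible, i.e., every integer 0 ≤ x ≤ a_k is a sum of at most h_0 elements of A_k with h_0 ≥ 2. Then there exists h_1 with h_0 ≤ h_1 ≤ 2h_0 − 2 such that every integer 0 ≤ x ≤ h_1·a_k is a sum of at most h_1 elements of A_k, i.e., n(h_1, A_k) = h_1·a_k. -/

import Mathlib

/-- `n` is a sum of at most `h` elements of the basis `a 1, …, a k`
(repetition allowed), expressed with coefficients. -/
def RepIdx (a : ℕ → ℕ) (k h n : ℕ) : Prop :=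
  ∃ c : ℕ → ℕ, (∑ i ∈ Finset.Icc 1 k, c i) ≤ h ∧
    (∑ i ∈ Finset.Icc 1 k, c i * a i) = n

/-!
Write `x = q a_k + r` with `0 < r < a_k`. If `q ≤ h₀ - 2`, add `q` copies of `a_k` to a representation
of `r` with at most `h₀` summands. Otherwise take a representation `∑ c_i a_i` of `a_k - r` with
`m ≤ h₀` summands; it does not use `a_k`, and by the symmetry `a_i + a_{k-i} = a_k` the reflected sum
`∑ c_i a_{k-i}` equals `m a_k - (a_k - r)`, still with `m` summands. Adding `q + 1 - m` copies of `a_k`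
represents `x` with `q + 1 ≤ 2h₀ - 2` summands.
-/

open Finset

lemma sum_Icc_one_eq_sum_Ioo_add {M : Type*} [AddCommMonoid M] {k : ℕ} (hk : 1 ≤ k)
    (f : ℕ → M) : ∑ i ∈ Icc 1 k, f i = ∑ i ∈ Ioo 0 k, f i + f k := by
  rw [← zero_add 1, Icc_add_one_left_eq_Ioc, ← Ioo_insert_right (by omega),
    sum_insert (by simp), add_comm]

lemma sum_Ioo_reflect {M : Type*} [AddCommMonoid M] (k : ℕ) (f : ℕ → ℕ → M) :
    ∑ i ∈ Ioo 0 k, f (k - i) i = ∑ i ∈ Ioo 0 k, f i (k - i) :=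
  sum_nbij' (k - ·) (k - ·) (by intro i; simp; omega) (by intro i; simp; omega)
    (by intro i; simp; omega) (by intro i; simp; omega)
    (fun i hi => by rw [mem_Ioo] at hi; rw [Nat.sub_sub_self hi.2.le])

namespace RepIdx

variable {a : ℕ → ℕ} {k h h' n n' : ℕ}

lemma zero : RepIdx a k h 0 := ⟨0, by simp, by simp⟩

lemma mono (hh : h ≤ h') : RepIdx a k h n → RepIdx a k h' n
  | ⟨c, hc, hn⟩ => ⟨c, hc.trans hh, hn⟩

lemma add : RepIdx a k h n → RepIdx a k h' n' → RepIdx a k (h + h') (n + n')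
  | ⟨c, hc, hn⟩, ⟨c', hc', hn'⟩ =>
    ⟨c + c', by simp only [Pi.add_apply, sum_add_distrib]; omega,
      by simp only [Pi.add_apply, add_mul, sum_add_distrib, hn, hn']⟩

lemma mul_top (hk : 1 ≤ k) (q : ℕ) : RepIdx a k q (q * a k) :=
  ⟨Pi.single k q, by simp [sum_pi_single', hk],
    by simp [Pi.single_apply, ite_mul, hk]⟩

theorem exists_reflect (hk : 1 ≤ k) (hsymm : ∀ i, 1 ≤ i → i ≤ k - 1 → a i + a (k - i) = a k)
    (hn : n < a k) (hrep : RepIdx a k h n) :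
    ∃ m ≤ h, n ≤ m * a k ∧ RepIdx a k m (m * a k - n) := by
  obtain ⟨c, hc, rfl⟩ := hrep
  rw [sum_Icc_one_eq_sum_Ioo_add hk] at hc hn ⊢
  have hck : c k = 0 := by
    by_contra hne
    have : a k ≤ c k * a k := Nat.le_mul_of_pos_left _ (Nat.pos_of_ne_zero hne)
    omega
  simp only [hck, zero_mul, add_zero] at hc hn ⊢
  set m := ∑ i ∈ Ioo 0 k, c i
  have hpair : ∑ i ∈ Ioo 0 k, c i * a (k - i) + ∑ i ∈ Ioo 0 k, c i * a i = m * a k := by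
    rw [← sum_add_distrib, sum_mul]
    refine sum_congr rfl fun i hi => ?_
    rw [mem_Ioo] at hi
    rw [← mul_add, add_comm, hsymm i (by omega) (by omega)]
  have hIoo : ∀ i ∈ Ioo 0 k, i ≠ k := fun i hi => (mem_Ioo.1 hi).2.ne
  refine ⟨m, by omega, by omega, fun i => if i = k then 0 else c (k - i), ?_, ?_⟩
  · rw [sum_Icc_one_eq_sum_Ioo_add hk, if_pos rfl, add_zero, sum_ite_of_false hIoo,
      sum_Ioo_reflect k fun j _ => c j]
  · simp only [ite_mul, zero_mul]
    rw [sum_Icc_one_eq_sum_Ioo_add hk, if_pos rfl, add_zero, sum_ite_of_false hIoo,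
      sum_Ioo_reflect k fun j i => c j * a i]
    omega

theorem reflect {p : ℕ} (hk : 1 ≤ k)
    (hsymm : ∀ i, 1 ≤ i → i ≤ k - 1 → a i + a (k - i) = a k) (hn : n < a k) (hp : h ≤ p)
    (hrep : RepIdx a k h n) : RepIdx a k p (p * a k - n) := by
  obtain ⟨m, hm, hnm, hrep'⟩ := hrep.exists_reflect hk hsymm hn
  convert hrep'.add (mul_top hk (p - m)) using 1
  · omega
  · rw [Nat.sub_mul]
    have : m * a k ≤ p * a k := Nat.mul_le_mul_right _ (hm.trans hp)
    omega

end RepIdx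

theorem stmt5_general (a : ℕ → ℕ) (k h₀ : ℕ) (hk : 2 ≤ k) (hh0 : 2 ≤ h₀)
    (hsymm : ∀ i, 1 ≤ i → i ≤ k - 1 → a i + a (k - i) = a k)
    (hcov : ∀ x, x ≤ a k → RepIdx a k h₀ x) :
    ∃ h₁, h₀ ≤ h₁ ∧ h₁ ≤ 2 * h₀ - 2 ∧
      ∀ x, x ≤ h₁ * a k → RepIdx a k h₁ x := by
  refine ⟨2 * h₀ - 2, by omega, le_rfl, fun x hx => ?_⟩
  obtain rfl | hx0 := Nat.eq_zero_or_pos x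
  · exact RepIdx.zero
  have hA : 0 < a k := Nat.pos_of_ne_zero fun h => by rw [h, mul_zero] at hx; omega
  obtain ⟨q, r, hr, rfl⟩ : ∃ q r, r < a k ∧ x = q * a k + r :=
    ⟨x / a k, x % a k, Nat.mod_lt _ hA, (Nat.div_add_mod' x (a k)).symm⟩
  obtain rfl | hr0 := Nat.eq_zero_or_pos r
  · exact (RepIdx.mul_top (by omega) q).mono (Nat.le_of_mul_le_mul_right hx hA)
  have hq : q < 2 * h₀ - 2 := Nat.lt_of_mul_lt_mul_right (a := a k) (by omega)
  by_cases hsmall : q + 2 ≤ h₀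
  · exact ((RepIdx.mul_top (by omega) q).add (hcov r hr.le)).mono (by omega)
  · have hrefl := (hcov (a k - r) (by omega)).reflect (p := q + 1) (by omega) hsymm
      (by omega) (by omega)
    convert hrefl.mono hq using 1
    rw [add_mul, one_mul]
    omega

theorem stmt5 (a : ℕ → ℕ) (k h₀ : ℕ) (hk : 2 ≤ k) (hh0 : 2 ≤ h₀)
    (ha1 : a 1 = 1)
    (hmono : ∀ i j, 1 ≤ i → i < j → j ≤ k → a i < a j)
    (hsymm : ∀ i, 1 ≤ i → i ≤ k - 1 → a i + a (k - i) = a k)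
    (hcov : ∀ x, x ≤ a k → RepIdx a k h₀ x) :
    ∃ h₁, h₀ ≤ h₁ ∧ h₁ ≤ 2 * h₀ - 2 ∧
      ∀ x, x ≤ h₁ * a k → RepIdx a k h₁ x :=
  stmt5_general a k h₀ hk hh0 hsymm hcov
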